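/- arXiv:1606.06717 — 7 statements merged into one kernel-verified Lean document; each statement's English description precedes it below -/
import Mathlib

section
/- For every triangle Δ in ℝ² with vertices A, B, C (not collinear), the perimeter satisfies L(Δ) ≥ 2√3 · δ(Δ), where δ(Δ) is the minimax invariant of the boundary of Δ; equality holds if and only if Δ is equilateral. -/
/-!
If every vertex lies within `r` of a boundary point `p`, then by convexity of balls so does the
whole boundary, hence `δ ≤ r`. Take `p` the midpoint of the longest side `a`: by Apollonius
`4|pV|² ≤ ab + bc + ca` for every vertex `V`, so `12δ² ≤ 3(ab + bc + ca) ≤ (a + b + c)²`, with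
equality in the last step only when `a = b = c`. Conversely, in an equilateral triangle of side
`d` every boundary point is at distance at least `(√3/2) d` from the opposite vertex.
-/

open Metric Bornology

section Minimax

variable {α : Type*} [PseudoMetricSpace α] {S : Set α} {r : ℝ}

noncomputable def minimax (S : Set α) : ℝ := ⨅ p : S, ⨆ q : S, dist (p : α) q

lemma minimax_nonneg (S : Set α) : 0 ≤ minimax S :=
  Real.iInf_nonneg fun _ => Real.iSup_nonneg fun _ => dist_nonneg

lemma minimax_le {p : α} (hp : p ∈ S) (hS : S ⊆ closedBall p r) : minimax S ≤ r := by
  have : Nonempty S := ⟨⟨p, hp⟩⟩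
  refine (ciInf_le ⟨0, ?_⟩ ⟨p, hp⟩).trans (ciSup_le fun q => mem_closedBall'.1 (hS q.2))
  rintro _ ⟨q, rfl⟩
  exact Real.iSup_nonneg fun _ => dist_nonneg

lemma le_minimax (hne : S.Nonempty) (hb : IsBounded S) (h : ∀ p ∈ S, ∃ q ∈ S, r ≤ dist p q) :
    r ≤ minimax S := by
  have : Nonempty S := hne.to_subtype
  obtain ⟨C, hC⟩ := isBounded_iff.1 hb
  refine le_ciInf fun p => ?_
  obtain ⟨q, hq, hr⟩ := h p p.2
  refine le_ciSup_of_le ⟨C, ?_⟩ ⟨q, hq⟩ hr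
  rintro _ ⟨q, rfl⟩
  exact hC p.2 q.2

end Minimax

section TriangleBoundary

variable {E : Type*} [AddCommGroup E] [Module ℝ E] {A B C : E}

def triangleBoundary (A B C : E) : Set E := segment ℝ A B ∪ segment ℝ B C ∪ segment ℝ C A

lemma triangleBoundary_rotate : triangleBoundary B C A = triangleBoundary A B C := by
  simp only [triangleBoundary, Set.union_comm, Set.union_left_comm]

lemma vertices_mem_triangleBoundary :
    A ∈ triangleBoundary A B C ∧ B ∈ triangleBoundary A B C ∧ C ∈ triangleBoundary A B C :=
  ⟨.inl (.inl (left_mem_segment ℝ A B)), .inl (.inl (right_mem_segment ℝ A B)),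
    .inl (.inr (right_mem_segment ℝ B C))⟩

lemma Convex.triangleBoundary_subset {s : Set E} (hs : Convex ℝ s) (hA : A ∈ s) (hB : B ∈ s)
    (hC : C ∈ s) : triangleBoundary A B C ⊆ s :=
  Set.union_subset (Set.union_subset (hs.segment_subset hA hB) (hs.segment_subset hB hC))
    (hs.segment_subset hC hA)

end TriangleBoundary

lemma eq_and_eq_of_sq_add_le {a b c : ℝ} (h : (a + b + c) ^ 2 ≤ 3 * (a * b + b * c + c * a)) :
    a = b ∧ b = c := by
  constructor <;> nlinarith [sq_nonneg (a - b), sq_nonneg (b - c), sq_nonneg (c - a)]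

section InnerProductSpace

variable {E : Type*} [NormedAddCommGroup E] [InnerProductSpace ℝ E]

/-- Stewart's theorem. -/
lemma dist_sq_lineMap (X Y Z : E) (t : ℝ) :
    dist Z (AffineMap.lineMap X Y t) ^ 2 =
      (1 - t) * dist Z X ^ 2 + t * dist Z Y ^ 2 - t * (1 - t) * dist X Y ^ 2 := by
  have hp : Z - AffineMap.lineMap X Y t = (1 - t) • (Z - X) + t • (Z - Y) := by
    rw [AffineMap.lineMap_apply_module]; module
  have hXY : X - Y = (Z - Y) - (Z - X) := by abel
  simp only [dist_eq_norm, hp, hXY, norm_add_sq_real, norm_sub_sq_real, norm_smul,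
    inner_smul_left, inner_smul_right, real_inner_comm (Z - X), Real.norm_eq_abs, mul_pow, sq_abs]
  simp only [RCLike.conj_to_real]
  ring

lemma sqrt_three_div_two_mul_le_dist_of_mem_segment {X Y Z p : E} {d : ℝ} (hXY : dist X Y = d)
    (hYZ : dist Y Z = d) (hZX : dist Z X = d) (hp : p ∈ segment ℝ X Y) :
    √3 / 2 * d ≤ dist p Z := by
  rw [segment_eq_image_lineMap] at hp
  obtain ⟨t, ⟨ht0, ht1⟩, rfl⟩ := hp
  have hd : 0 ≤ d := hXY ▸ dist_nonneg
  have hsq : dist Z (AffineMap.lineMap X Y t) ^ 2 = (1 - t * (1 - t)) * d ^ 2 := by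
    rw [dist_sq_lineMap, hXY, hZX, dist_comm Z Y, hYZ]; ring
  rw [dist_comm, ← pow_le_pow_iff_left₀ (by positivity) dist_nonneg two_ne_zero, hsq, mul_pow,
    div_pow, Real.sq_sqrt zero_le_three]
  nlinarith [sq_nonneg (2 * t - 1), sq_nonneg d]

lemma exists_sqrt_three_div_two_mul_le_dist {A B C : E} {d : ℝ} (hAB : dist A B = d)
    (hBC : dist B C = d) (hCA : dist C A = d) :
    ∀ p ∈ triangleBoundary A B C, ∃ q ∈ triangleBoundary A B C, √3 / 2 * d ≤ dist p q := by
  obtain ⟨hA, hB, hC⟩ := vertices_mem_triangleBoundary (A := A) (B := B) (C := C)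
  rintro p ((hp | hp) | hp)
  · exact ⟨C, hC, sqrt_three_div_two_mul_le_dist_of_mem_segment hAB hBC hCA hp⟩
  · exact ⟨A, hA, sqrt_three_div_two_mul_le_dist_of_mem_segment hBC hCA hAB hp⟩
  · exact ⟨B, hB, sqrt_three_div_two_mul_le_dist_of_mem_segment hCA hAB hBC hp⟩

/-- With `a = |YZ|` the longest side, `4|XM|² = 2b² + 2c² - a²` by Apollonius, and
`ab + bc + ca - (2b² + 2c² - a²) = 2(2a - b - c)(b + c - a) + 5(a - b)(a - c) ≥ 0`. -/
lemma triangleBoundary_subset_closedBall_midpoint {X Y Z : E} (hZX : dist Z X ≤ dist Y Z)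
    (hXY : dist X Y ≤ dist Y Z) :
    triangleBoundary X Y Z ⊆ closedBall (midpoint ℝ Y Z)
      (√(dist X Y * dist Y Z + dist Y Z * dist Z X + dist Z X * dist X Y) / 2) := by
  set M := midpoint ℝ Y Z
  set Q := dist X Y * dist Y Z + dist Y Z * dist Z X + dist Z X * dist X Y
  have htri : dist Y Z ≤ dist X Y + dist Z X := by
    linarith [dist_triangle Y X Z, dist_comm X Y, dist_comm X Z]
  have hmedian : 4 * dist X M ^ 2 = 2 * dist X Y ^ 2 + 2 * dist Z X ^ 2 - dist Y Z ^ 2 := by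
    have := EuclideanGeometry.dist_sq_add_dist_sq_eq_two_mul_dist_midpoint_sq_add_half_dist_sq X Y Z
    rw [dist_comm X Z] at this
    linear_combination (-2) * this
  have hMY : 2 * dist Y M = dist Y Z := by
    rw [dist_left_midpoint, Real.norm_two]; ring
  have hMZ : 2 * dist Z M = dist Y Z := by
    rw [dist_right_midpoint, Real.norm_two, dist_comm]; ring
  have hQ : 0 ≤ Q := by positivity
  have hmem : ∀ V, (2 * dist V M) ^ 2 ≤ Q → V ∈ closedBall M (√Q / 2) := fun V hV => by
    rwa [mem_closedBall, le_div_iff₀ two_pos, mul_comm, Real.le_sqrt (by positivity) hQ]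
  refine (convex_closedBall M _).triangleBoundary_subset (hmem X ?_) (hmem Y ?_) (hmem Z ?_)
  · nlinarith [mul_nonneg (sub_nonneg.2 hZX) (sub_nonneg.2 hXY), mul_nonneg
      (add_nonneg (sub_nonneg.2 hZX) (sub_nonneg.2 hXY)) (sub_nonneg.2 htri)]
  · rw [hMY]; nlinarith [mul_nonneg (dist_nonneg (x := X) (y := Y)) (dist_nonneg (x := Z) (y := X))]
  · rw [hMZ]; nlinarith [mul_nonneg (dist_nonneg (x := X) (y := Y)) (dist_nonneg (x := Z) (y := X))]

lemma exists_mem_triangleBoundary_subset_closedBall (A B C : E) :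
    ∃ p ∈ triangleBoundary A B C, triangleBoundary A B C ⊆
      closedBall p (√(dist A B * dist B C + dist B C * dist C A + dist C A * dist A B) / 2) := by
  wlog hBC : dist C A ≤ dist B C ∧ dist A B ≤ dist B C generalizing A B C
  · have hrot (A B C : E) : dist B C * dist C A + dist C A * dist A B + dist A B * dist B C =
        dist A B * dist B C + dist B C * dist C A + dist C A * dist A B := by ring
    by_cases hCA : dist A B ≤ dist C A ∧ dist B C ≤ dist C A
    · simpa only [triangleBoundary_rotate, hrot] using this B C A hCA
    · have hAB : dist B C ≤ dist A B ∧ dist C A ≤ dist A B := by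
        constructor <;> grind
      simpa only [triangleBoundary_rotate, hrot] using this C A B hAB
  exact ⟨midpoint ℝ B C, .inl (.inr (midpoint_mem_segment B C)),
    triangleBoundary_subset_closedBall_midpoint hBC.1 hBC.2⟩

end InnerProductSpace

theorem triangle_perimeter_ge_delta_general
    (A B C : EuclideanSpace ℝ (Fin 2))
    (Γ : Set (EuclideanSpace ℝ (Fin 2)))
    (hΓ : Γ = segment ℝ A B ∪ segment ℝ B C ∪ segment ℝ C A)
    (L δ : ℝ) (hL : L = dist A B + dist B C + dist C A)
    (hδ : δ = ⨅ p : Γ, ⨆ q : Γ, dist (p : EuclideanSpace ℝ (Fin 2)) (q : EuclideanSpace ℝ (Fin 2))) :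
    L ≥ 2 * Real.sqrt 3 * δ ∧
      (L = 2 * Real.sqrt 3 * δ ↔ (dist A B = dist B C ∧ dist B C = dist C A)) := by
  obtain rfl : Γ = triangleBoundary A B C := hΓ
  obtain rfl : δ = minimax (triangleBoundary A B C) := hδ
  obtain ⟨M, hM, hsub⟩ := exists_mem_triangleBoundary_subset_closedBall A B C
  set Q := dist A B * dist B C + dist B C * dist C A + dist C A * dist A B
  have hδQ : (2 * √3 * minimax (triangleBoundary A B C)) ^ 2 ≤ 3 * Q := by
    have h2δ : (2 * minimax (triangleBoundary A B C)) ^ 2 ≤ Q := by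
      rw [← Real.le_sqrt (mul_nonneg zero_le_two (minimax_nonneg _)) (by positivity)]
      linarith [minimax_le hM hsub]
    rw [mul_pow, mul_pow, Real.sq_sqrt zero_le_three]
    linarith
  have hQL : 3 * Q ≤ L ^ 2 := by
    rw [hL]
    nlinarith [sq_nonneg (dist A B - dist B C), sq_nonneg (dist B C - dist C A),
      sq_nonneg (dist C A - dist A B)]
  have hL0 : 0 ≤ L := hL ▸ by positivity
  have hle := (pow_le_pow_iff_left₀ (mul_nonneg (by positivity) (minimax_nonneg _)) hL0
    two_ne_zero).1 (hδQ.trans hQL)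
  refine ⟨hle, fun heq => eq_and_eq_of_sq_add_le ?_, fun ⟨hAB, hBC⟩ => le_antisymm ?_ hle⟩
  · rw [← hL, heq]; exact hδQ
  · have hlow := le_minimax ⟨A, vertices_mem_triangleBoundary.1⟩
      (isBounded_closedBall.subset hsub) (exists_sqrt_three_div_two_mul_le_dist rfl hAB.symm
        (hAB.trans hBC).symm)
    rw [hL, ← hAB, ← hBC]
    nlinarith [Real.sq_sqrt zero_le_three, Real.sqrt_nonneg 3]

/-- For every (nondegenerate) triangle with vertices `A, B, C` in the plane,
the perimeter `L` and the minimax invariant `δ` of the boundary satisfy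
`L ≥ 2√3 · δ`, with equality iff the triangle is equilateral. -/
theorem triangle_perimeter_ge_delta
    (A B C : EuclideanSpace ℝ (Fin 2))
    (hABC : ¬ Collinear ℝ ({A, B, C} : Set (EuclideanSpace ℝ (Fin 2))))
    (Γ : Set (EuclideanSpace ℝ (Fin 2)))
    (hΓ : Γ = segment ℝ A B ∪ segment ℝ B C ∪ segment ℝ C A)
    (L δ : ℝ) (hL : L = dist A B + dist B C + dist C A)
    (hδ : δ = ⨅ p : Γ, ⨆ q : Γ, dist (p : EuclideanSpace ℝ (Fin 2)) (q : EuclideanSpace ℝ (Fin 2))) :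
    L ≥ 2 * Real.sqrt 3 * δ ∧
      (L = 2 * Real.sqrt 3 * δ ↔ (dist A B = dist B C ∧ dist B C = dist C A)) :=
  triangle_perimeter_ge_delta_general A B C Γ hΓ L δ hL hδ
end

section
/- Let Δ be the triangle with vertices A = (−1,0), B = (1,0), C = (x,y) where x ≥ 0, y > 0, and x² + y² ≤ 1. Then δ(Γ) = 1, where Γ is the boundary of Δ; consequently L(Δ)/δ(Γ) > 4. -/
/-!
The midpoint `O = (0,0)` of the base `AB` lies on `Γ`, and the closed unit disc around it
contains the three vertices, hence (being convex) all of `Γ`; so `δ ≤ 1`. Conversely every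
`p ∈ Γ` has `2 = |AB| ≤ |pA| + |pB|`, so some point of `Γ` is at distance at least `1` from `p`.
As `C` lies off the line `AB`, the strict triangle inequality gives `|BC| + |CA| > |AB| = 2`,
whence `L > 4`.
-/

open Metric Bornology

section MinimaxDist

variable {α : Type*} [PseudoMetricSpace α]

noncomputable def minimaxDist (S : Set α) : ℝ :=
  ⨅ p : S, ⨆ q : S, dist (p : α) q

lemma minimaxDist_le {S : Set α} {o : α} {r : ℝ} (ho : o ∈ S) (hS : S ⊆ closedBall o r) :
    minimaxDist S ≤ r := by
  have : Nonempty S := ⟨⟨o, ho⟩⟩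
  refine ciInf_le_of_le ⟨0, ?_⟩ ⟨o, ho⟩ (ciSup_le fun q => ?_)
  · rintro _ ⟨p, rfl⟩
    exact Real.iSup_nonneg fun q => dist_nonneg
  · rw [dist_comm]
    exact hS q.2

-- Boundedness matters: for an unbounded `S` the supremum is the junk value `0`.
lemma half_dist_le_minimaxDist {S : Set α} (hS : IsBounded S) {a b : α} (ha : a ∈ S)
    (hb : b ∈ S) : dist a b / 2 ≤ minimaxDist S := by
  have : Nonempty S := ⟨⟨a, ha⟩⟩
  obtain ⟨C, hC⟩ := isBounded_iff.1 hS
  refine le_ciInf fun p => ?_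
  have hbdd : BddAbove (Set.range fun q : S => dist (p : α) q) :=
    ⟨C, by rintro _ ⟨q, rfl⟩; exact hC p.2 q.2⟩
  have hpa := le_ciSup hbdd ⟨a, ha⟩
  have hpb := le_ciSup hbdd ⟨b, hb⟩
  linarith [dist_triangle_left a b p]

end MinimaxDist

section NormedSpace

variable {E : Type*} [NormedAddCommGroup E] [NormedSpace ℝ E]

lemma minimaxDist_eq_half_dist {S : Set E} {a b : E} (hab : segment ℝ a b ⊆ S)
    (hS : S ⊆ closedBall (midpoint ℝ a b) (dist a b / 2)) : minimaxDist S = dist a b / 2 :=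
  le_antisymm (minimaxDist_le (hab (midpoint_mem_segment a b)) hS)
    (half_dist_le_minimaxDist (isBounded_closedBall.subset hS) (hab (left_mem_segment ℝ a b))
      (hab (right_mem_segment ℝ a b)))

lemma dist_lt_dist_add_dist_of_apply_ne [StrictConvexSpace ℝ E] (f : E →ₗ[ℝ] ℝ) {a b c : E}
    (hab : f a = f b) (hc : f c ≠ f a) : dist a b < dist a c + dist c b := by
  rw [dist_lt_dist_add_dist_iff, ← mem_segment_iff_wbtw]
  exact fun h => hc ((convex_hyperplane f.isLinear (f a)).segment_subset rfl hab.symm h)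

end NormedSpace

lemma dist_toLp_fin_two (a b c d : ℝ) :
    dist ((WithLp.equiv 2 (Fin 2 → ℝ)).symm ![a, b]) ((WithLp.equiv 2 (Fin 2 → ℝ)).symm ![c, d])
      = √((a - c) ^ 2 + (b - d) ^ 2) := by
  simp [EuclideanSpace.dist_eq, Fin.sum_univ_two, Real.dist_eq, sq_abs]

lemma midpoint_toLp_fin_two (a b c d : ℝ) :
    midpoint ℝ ((WithLp.equiv 2 (Fin 2 → ℝ)).symm ![a, b])
        ((WithLp.equiv 2 (Fin 2 → ℝ)).symm ![c, d])
      = (WithLp.equiv 2 (Fin 2 → ℝ)).symm ![(a + c) / 2, (b + d) / 2] := by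
  ext i
  fin_cases i <;> simp [midpoint_eq_smul_add] <;> ring

theorem triangle_delta_eq_one_general
    (x y : ℝ) (hy : 0 < y) (hxy : x ^ 2 + y ^ 2 ≤ 1)
    (A B C : EuclideanSpace ℝ (Fin 2))
    (hA : A = (WithLp.equiv 2 (Fin 2 → ℝ)).symm ![-1, 0])
    (hB : B = (WithLp.equiv 2 (Fin 2 → ℝ)).symm ![1, 0])
    (hC : C = (WithLp.equiv 2 (Fin 2 → ℝ)).symm ![x, y])
    (Γ : Set (EuclideanSpace ℝ (Fin 2)))
    (hΓ : Γ = segment ℝ A B ∪ segment ℝ B C ∪ segment ℝ C A)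
    (L δ : ℝ) (hL : L = dist A B + dist B C + dist C A)
    (hδ : δ = ⨅ p : Γ, ⨆ q : Γ, dist (p : EuclideanSpace ℝ (Fin 2)) (q : EuclideanSpace ℝ (Fin 2))) :
    δ = 1 ∧ L / δ > 4 := by
  have hAB : dist A B = 2 := by
    rw [hA, hB, dist_toLp_fin_two, Real.sqrt_eq_iff_mul_self_eq_of_pos two_pos]
    norm_num
  have hvertices : A ∈ closedBall (midpoint ℝ A B) 1 ∧ B ∈ closedBall (midpoint ℝ A B) 1 ∧
      C ∈ closedBall (midpoint ℝ A B) 1 := by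
    simp only [mem_closedBall, hA, hB, hC, midpoint_toLp_fin_two, dist_toLp_fin_two]
    norm_num
    simpa using hxy
  obtain ⟨hAM, hBM, hCM⟩ := hvertices
  have hΓM : Γ ⊆ closedBall (midpoint ℝ A B) (dist A B / 2) := by
    have hdisc := convex_closedBall (midpoint ℝ A B) (dist A B / 2)
    rw [hAB, div_self two_ne_zero] at hdisc ⊢
    rw [hΓ]
    exact Set.union_subset (Set.union_subset (hdisc.segment_subset hAM hBM)
      (hdisc.segment_subset hBM hCM)) (hdisc.segment_subset hCM hAM)
  have hδ1 : δ = 1 := by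
    have hAB_Γ : segment ℝ A B ⊆ Γ := hΓ ▸ Set.subset_union_left.trans Set.subset_union_left
    rw [hδ, ← minimaxDist, minimaxDist_eq_half_dist hAB_Γ hΓM, hAB, div_self two_ne_zero]
  have hperimeter : dist A B < dist A C + dist C B := by
    refine dist_lt_dist_add_dist_of_apply_ne
      (EuclideanSpace.proj (1 : Fin 2) : EuclideanSpace ℝ (Fin 2) →L[ℝ] ℝ).toLinearMap ?_ ?_
    · simp [hA, hB]
    · simpa [hA, hC] using hy.ne'
  refine ⟨hδ1, ?_⟩
  rw [hδ1, div_one, hL, dist_comm B C, dist_comm C A]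
  linarith

/-- For the triangle with vertices `A = (−1,0)`, `B = (1,0)`, `C = (x,y)` with
`x ≥ 0`, `y > 0` and `x² + y² ≤ 1`, the minimax invariant of the boundary is
`δ = 1`, and consequently `L/δ > 4`. -/
theorem triangle_delta_eq_one
    (x y : ℝ) (hx : 0 ≤ x) (hy : 0 < y) (hxy : x ^ 2 + y ^ 2 ≤ 1)
    (A B C : EuclideanSpace ℝ (Fin 2))
    (hA : A = (WithLp.equiv 2 (Fin 2 → ℝ)).symm ![-1, 0])
    (hB : B = (WithLp.equiv 2 (Fin 2 → ℝ)).symm ![1, 0])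
    (hC : C = (WithLp.equiv 2 (Fin 2 → ℝ)).symm ![x, y])
    (Γ : Set (EuclideanSpace ℝ (Fin 2)))
    (hΓ : Γ = segment ℝ A B ∪ segment ℝ B C ∪ segment ℝ C A)
    (L δ : ℝ) (hL : L = dist A B + dist B C + dist C A)
    (hδ : δ = ⨅ p : Γ, ⨆ q : Γ, dist (p : EuclideanSpace ℝ (Fin 2)) (q : EuclideanSpace ℝ (Fin 2))) :
    δ = 1 ∧ L / δ > 4 :=
  triangle_delta_eq_one_general x y hy hxy A B C hA hB hC Γ hΓ L δ hL hδ
end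

section
/- For the unit square P (boundary of [0,1]²), δ(P) = (√5)/2 and L(P) = 4, so the ratio of the perimeter to the minimax invariant is L(P)/δ(P) = 8/√5 = (8/5)√5. -/
set_option maxHeartbeats 4000000 in
/-- For the boundary `P` of the unit square, `δ(P) = √5/2`, `L(P) = 4`, and the
isoperimetric quotient is `L/δ = (8/5)√5`. -/

theorem square_delta
    (v00 v10 v11 v01 : EuclideanSpace ℝ (Fin 2))
    (h00 : v00 = (WithLp.equiv 2 (Fin 2 → ℝ)).symm ![0, 0])
    (h10 : v10 = (WithLp.equiv 2 (Fin 2 → ℝ)).symm ![1, 0])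
    (h11 : v11 = (WithLp.equiv 2 (Fin 2 → ℝ)).symm ![1, 1])
    (h01 : v01 = (WithLp.equiv 2 (Fin 2 → ℝ)).symm ![0, 1])
    (P : Set (EuclideanSpace ℝ (Fin 2)))
    (hP : P = segment ℝ v00 v10 ∪ segment ℝ v10 v11 ∪ segment ℝ v11 v01 ∪
      segment ℝ v01 v00)
    (δ : ℝ)
    (hδ : δ = ⨅ p : P, ⨆ q : P, dist (p : EuclideanSpace ℝ (Fin 2)) (q : EuclideanSpace ℝ (Fin 2))) :
    δ = Real.sqrt 5 / 2 ∧ 4 / δ = (8 / 5) * Real.sqrt 5 := by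
  have e00_0 : v00 0 = 0 := by rw [h00]; rfl
  have e00_1 : v00 1 = 0 := by rw [h00]; rfl
  have e10_0 : v10 0 = 1 := by rw [h10]; rfl
  have e10_1 : v10 1 = 0 := by rw [h10]; rfl
  have e11_0 : v11 0 = 1 := by rw [h11]; rfl
  have e11_1 : v11 1 = 1 := by rw [h11]; rfl
  have e01_0 : v01 0 = 0 := by rw [h01]; rfl
  have e01_1 : v01 1 = 1 := by rw [h01]; rfl
  have hdist : ∀ x y : EuclideanSpace ℝ (Fin 2),
      dist x y = Real.sqrt ((x 0 - y 0)^2 + (x 1 - y 1)^2) := by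
    intro x y
    rw [EuclideanSpace.dist_eq, Fin.sum_univ_two]
    simp [Real.dist_eq, sq_abs]
  -- coordinates of points in P
  have hcoord : ∀ q ∈ P, (0 ≤ q 0 ∧ q 0 ≤ 1) ∧ (0 ≤ q 1 ∧ q 1 ≤ 1) ∧
      (q 1 = 0 ∨ q 0 = 1 ∨ q 1 = 1 ∨ q 0 = 0) := by
    clear hδ
    intro q hq
    rw [hP] at hq
    clear hP
    rcases hq with ((hq | hq) | hq) | hq <;>
      obtain ⟨s, t, hs, ht, hst, rfl⟩ := hq
    · refine ⟨⟨?_, ?_⟩, ⟨?_, ?_⟩, Or.inl ?_⟩ <;>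
        simp only [PiLp.add_apply, PiLp.smul_apply, smul_eq_mul, e00_0, e10_0, e00_1, e10_1] <;> nlinarith
    · refine ⟨⟨?_, ?_⟩, ⟨?_, ?_⟩, Or.inr (Or.inl ?_)⟩ <;>
        simp only [PiLp.add_apply, PiLp.smul_apply, smul_eq_mul, e10_0, e11_0, e10_1, e11_1] <;> nlinarith
    · refine ⟨⟨?_, ?_⟩, ⟨?_, ?_⟩, Or.inr (Or.inr (Or.inl ?_))⟩ <;>
        simp only [PiLp.add_apply, PiLp.smul_apply, smul_eq_mul, e11_0, e01_0, e11_1, e01_1] <;> nlinarith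
    · refine ⟨⟨?_, ?_⟩, ⟨?_, ?_⟩, Or.inr (Or.inr (Or.inr ?_))⟩ <;>
        simp only [PiLp.add_apply, PiLp.smul_apply, smul_eq_mul, e01_0, e00_0, e01_1, e00_1] <;> nlinarith
  -- corners are in P
  have hv00P : v00 ∈ P := by rw [hP]; exact Or.inl (Or.inl (Or.inl (left_mem_segment ℝ _ _)))
  have hv10P : v10 ∈ P := by rw [hP]; exact Or.inl (Or.inl (Or.inl (right_mem_segment ℝ _ _)))
  have hv11P : v11 ∈ P := by rw [hP]; exact Or.inl (Or.inl (Or.inr (right_mem_segment ℝ _ _)))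
  have hv01P : v01 ∈ P := by rw [hP]; exact Or.inl (Or.inr (right_mem_segment ℝ _ _))
  -- the midpoint of the bottom edge
  set m : EuclideanSpace ℝ (Fin 2) := (1/2 : ℝ) • v00 + (1/2 : ℝ) • v10 with hm
  have hmP : m ∈ P := by
    rw [hP]
    exact Or.inl (Or.inl (Or.inl ⟨1/2, 1/2, by norm_num, by norm_num, by norm_num, rfl⟩))
  have hm0 : m 0 = 1/2 := by
    show (1/2 : ℝ) * v00 0 + (1/2 : ℝ) * v10 0 = 1/2
    rw [e00_0, e10_0]; ring
  have hm1 : m 1 = 0 := by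
    show (1/2 : ℝ) * v00 1 + (1/2 : ℝ) * v10 1 = 0
    rw [e00_1, e10_1]; ring
  have sqrt54 : Real.sqrt (5/4) = Real.sqrt 5 / 2 := by
    rw [show (5:ℝ)/4 = (Real.sqrt 5 / 2)^2 by
        rw [div_pow, Real.sq_sqrt (by norm_num : (0:ℝ) ≤ 5)]; norm_num,
      Real.sqrt_sq (by positivity)]
  -- sup over q is bounded above
  have hbdd : ∀ p : P, BddAbove (Set.range fun q : P =>
      dist (p : EuclideanSpace ℝ (Fin 2)) (q : EuclideanSpace ℝ (Fin 2))) := by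
    clear hδ
    intro p
    refine ⟨2, ?_⟩
    rintro _ ⟨q, rfl⟩
    show dist (p : EuclideanSpace ℝ (Fin 2)) (q : EuclideanSpace ℝ (Fin 2)) ≤ 2
    obtain ⟨⟨hp00, hp01⟩, ⟨hp10, hp11⟩, -⟩ := hcoord p p.2
    obtain ⟨⟨hq00, hq01⟩, ⟨hq10, hq11⟩, -⟩ := hcoord q q.2
    rw [hdist]
    have : ((p:EuclideanSpace ℝ (Fin 2)) 0 - (q:EuclideanSpace ℝ (Fin 2)) 0)^2 +
        ((p:EuclideanSpace ℝ (Fin 2)) 1 - (q:EuclideanSpace ℝ (Fin 2)) 1)^2 ≤ 4 := by nlinarith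
    calc Real.sqrt _ ≤ Real.sqrt 4 := Real.sqrt_le_sqrt this
    _ = 2 := by rw [show (4:ℝ) = 2^2 by norm_num, Real.sqrt_sq (by norm_num)]
  haveI : Nonempty P := ⟨⟨v00, hv00P⟩⟩
  -- every point of P has a far corner
  have hfar : ∀ p : P, Real.sqrt 5 / 2 ≤ ⨆ q : P,
      dist (p : EuclideanSpace ℝ (Fin 2)) (q : EuclideanSpace ℝ (Fin 2)) := by
    clear hδ
    intro p
    obtain ⟨⟨hp00, hp01⟩, ⟨hp10, hp11⟩, hside⟩ := hcoord p p.2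
    have hstep : ∃ c ∈ P, 5/4 ≤ ((p:EuclideanSpace ℝ (Fin 2)) 0 - c 0)^2 +
        ((p:EuclideanSpace ℝ (Fin 2)) 1 - c 1)^2 := by
      rcases hside with h | h | h | h
      · rcases le_or_gt ((p:EuclideanSpace ℝ (Fin 2)) 0) (1/2) with hx | hx
        · exact ⟨v11, hv11P, by rw [e11_0, e11_1, h]; nlinarith⟩
        · exact ⟨v01, hv01P, by rw [e01_0, e01_1, h]; nlinarith⟩
      · rcases le_or_gt ((p:EuclideanSpace ℝ (Fin 2)) 1) (1/2) with hx | hx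
        · exact ⟨v01, hv01P, by rw [e01_0, e01_1, h]; nlinarith⟩
        · exact ⟨v00, hv00P, by rw [e00_0, e00_1, h]; nlinarith⟩
      · rcases le_or_gt ((p:EuclideanSpace ℝ (Fin 2)) 0) (1/2) with hx | hx
        · exact ⟨v10, hv10P, by rw [e10_0, e10_1, h]; nlinarith⟩
        · exact ⟨v00, hv00P, by rw [e00_0, e00_1, h]; nlinarith⟩
      · rcases le_or_gt ((p:EuclideanSpace ℝ (Fin 2)) 1) (1/2) with hx | hx
        · exact ⟨v11, hv11P, by rw [e11_0, e11_1, h]; nlinarith⟩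
        · exact ⟨v10, hv10P, by rw [e10_0, e10_1, h]; nlinarith⟩
    obtain ⟨c, hcP, hc⟩ := hstep
    have h1 : Real.sqrt 5 / 2 ≤ dist (p : EuclideanSpace ℝ (Fin 2)) c := by
      rw [hdist, ← sqrt54]
      exact Real.sqrt_le_sqrt hc
    exact h1.trans (le_ciSup (hbdd p) ⟨c, hcP⟩)
  have hub : (⨆ q : P, dist (m : EuclideanSpace ℝ (Fin 2)) (q : EuclideanSpace ℝ (Fin 2)))
      ≤ Real.sqrt 5 / 2 := by
    clear hδ
    refine ciSup_le fun q => ?_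
    obtain ⟨⟨hq00, hq01⟩, ⟨hq10, hq11⟩, -⟩ := hcoord q q.2
    rw [hdist, hm0, hm1, ← sqrt54]
    exact Real.sqrt_le_sqrt (by nlinarith)
  have hδ_eq : δ = Real.sqrt 5 / 2 := by
    rw [hδ]
    refine le_antisymm ?_ (le_ciInf hfar)
    calc (⨅ p : P, ⨆ q : P, dist (p : EuclideanSpace ℝ (Fin 2)) (q : EuclideanSpace ℝ (Fin 2)))
        ≤ ⨆ q : P, dist (m : EuclideanSpace ℝ (Fin 2)) (q : EuclideanSpace ℝ (Fin 2)) := by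
          refine ciInf_le ⟨Real.sqrt 5 / 2, ?_⟩ (⟨m, hmP⟩ : P)
          rintro _ ⟨p, rfl⟩; exact hfar p
    _ ≤ Real.sqrt 5 / 2 := hub
  refine ⟨hδ_eq, ?_⟩
  rw [hδ_eq]
  have h5 : Real.sqrt 5 * Real.sqrt 5 = 5 := Real.mul_self_sqrt (by norm_num)
  have hpos : (0:ℝ) < Real.sqrt 5 := Real.sqrt_pos.2 (by norm_num)
  field_simp
  nlinarith
end

section
/- For real u, v with u > 1/√3, u ≠ v, v > 0, the equation (u+v)/(2√(v²+1)) = u/√(u²+1) holds if and only if v = u(3 − u²)/(3u² − 1). -/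
/-! Both denominators are positive and both numerators nonnegative, so the equation is equivalent
to its square `(u + v)² (u² + 1) = 4 u² (v² + 1)`. The difference of the two sides factors as
`(u - v) ((3u² - 1) v - u (3 - u²))`, and `u ≠ v` leaves only the second factor. -/

theorem div_eq_div_iff_sq_mul_sq_eq {K : Type*} [Field K] [LinearOrder K] [IsStrictOrderedRing K]
    {a b p q : K} (ha : 0 ≤ a) (hb : 0 ≤ b) (hp : 0 < p) (hq : 0 < q) :
    a / p = b / q ↔ a ^ 2 * q ^ 2 = b ^ 2 * p ^ 2 := by
  rw [div_eq_div_iff hp.ne' hq.ne', ← mul_pow, ← mul_pow]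
  exact (pow_left_inj₀ (by positivity) (by positivity) two_ne_zero).symm

theorem one_lt_three_mul_sq_of_inv_sqrt_three_lt {u : ℝ} (hu : 1 / Real.sqrt 3 < u) :
    1 < 3 * u ^ 2 := by
  have h := pow_lt_pow_left₀ hu (by positivity) two_ne_zero
  rw [div_pow, Real.sq_sqrt zero_le_three] at h
  linarith

theorem kite_sq_sub_sq_eq (u v : ℝ) :
    (u + v) ^ 2 * (u ^ 2 + 1) - u ^ 2 * (2 ^ 2 * (v ^ 2 + 1)) =
      (u - v) * ((3 * u ^ 2 - 1) * v - u * (3 - u ^ 2)) := by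
  ring

/-- For `u > 1/√3`, `v > 0`, `u ≠ v`, the equality of the two perpendicular
distances `(u+v)/(2√(v²+1)) = u/√(u²+1)` holds iff `v = u(3−u²)/(3u²−1)`. -/
theorem kite_perpendicular_equality (u v : ℝ)
    (hu : 1 / Real.sqrt 3 < u) (hv : 0 < v) (huv : u ≠ v) :
    (u + v) / (2 * Real.sqrt (v ^ 2 + 1)) = u / Real.sqrt (u ^ 2 + 1) ↔
      v = u * (3 - u ^ 2) / (3 * u ^ 2 - 1) := by
  have hu0 : 0 < u := lt_trans (by positivity) hu
  have h3 : 3 * u ^ 2 - 1 ≠ 0 := (sub_pos.2 (one_lt_three_mul_sq_of_inv_sqrt_three_lt hu)).ne'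
  rw [div_eq_div_iff_sq_mul_sq_eq (by positivity) hu0.le (by positivity) (by positivity),
    mul_pow, Real.sq_sqrt (by positivity), Real.sq_sqrt (by positivity), ← sub_eq_zero,
    kite_sq_sub_sq_eq, mul_eq_zero, or_iff_right (sub_ne_zero.2 huv), sub_eq_zero,
    eq_div_iff h3, mul_comm v]
end

section
/- For 0 ≤ u ≤ 2 and 0 < v ≤ 1 with u + v ≤ 2 and u² + v² ≥ 2, the inequality 3(u−1)v² > 2(u−2) holds, and consequently 1 + u > √3 · √((u²−1)(1−v²)). -/
/-- In the elliptic-coordinate region `1 < u ≤ 2`, `0 < v ≤ 1`, `u + v ≤ 2`,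
`u² + v² ≥ 2`, one has `3(u−1)v² > 2(u−2)` and consequently
`1 + u > √3 · √((u²−1)(1−v²))`. -/
theorem elliptic_region_inequality (u v : ℝ)
    (hu1 : 1 < u) (hu2 : u ≤ 2) (hv0 : 0 < v) (hv1 : v ≤ 1)
    (hsum : u + v ≤ 2) (hsq : 2 ≤ u ^ 2 + v ^ 2) :
    3 * (u - 1) * v ^ 2 > 2 * (u - 2) ∧
      1 + u > Real.sqrt 3 * Real.sqrt ((u ^ 2 - 1) * (1 - v ^ 2)) := by
  have h1 : 3 * (u - 1) * v ^ 2 > 2 * (u - 2) := by nlinarith [mul_nonneg (by nlinarith : (0:ℝ) ≤ u ^ 2 - 1) (by nlinarith : (0:ℝ) ≤ 1 - v ^ 2)]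
  refine ⟨h1, ?_⟩
  have key : 3 * ((u ^ 2 - 1) * (1 - v ^ 2)) < (1 + u) ^ 2 := by nlinarith [mul_nonneg (by nlinarith : (0:ℝ) ≤ u ^ 2 - 1) (by nlinarith : (0:ℝ) ≤ 1 - v ^ 2)]
  have hnn : (0:ℝ) ≤ 3 * ((u ^ 2 - 1) * (1 - v ^ 2)) := by nlinarith [mul_nonneg (by nlinarith : (0:ℝ) ≤ u ^ 2 - 1) (by nlinarith : (0:ℝ) ≤ 1 - v ^ 2)]
  calc Real.sqrt 3 * Real.sqrt ((u ^ 2 - 1) * (1 - v ^ 2))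
      = Real.sqrt (3 * ((u ^ 2 - 1) * (1 - v ^ 2))) :=
        (Real.sqrt_mul (by norm_num) _).symm
    _ < Real.sqrt ((1 + u) ^ 2) := Real.sqrt_lt_sqrt hnn key
    _ = 1 + u := Real.sqrt_sq (by linarith)
end

section
/- For all real x with 0 ≤ x < √2 − 1, the inequality 4 + √((1−x)² + 4 − (1+x)²) ≥ 2√3 · √(4 − (1+x)²) holds, with equality exactly at x = 0. -/
set_option maxHeartbeats 1600000


/-- For `0 ≤ x < √2 − 1`:
`4 + √((1−x)² + 4 − (1+x)²) ≥ 2√3 · √(4 − (1+x)²)`, with equality iff `x = 0`. -/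
theorem boundary_case_inequality (x : ℝ) (hx0 : 0 ≤ x)
    (hx1 : x < Real.sqrt 2 - 1) :
    4 + Real.sqrt ((1 - x) ^ 2 + 4 - (1 + x) ^ 2) ≥
      2 * Real.sqrt 3 * Real.sqrt (4 - (1 + x) ^ 2) ∧
    (4 + Real.sqrt ((1 - x) ^ 2 + 4 - (1 + x) ^ 2) =
      2 * Real.sqrt 3 * Real.sqrt (4 - (1 + x) ^ 2) ↔ x = 0) := by
  have h2lt : Real.sqrt 2 < 3/2 := by
    nlinarith [Real.sq_sqrt (by norm_num : (2:ℝ) ≥ 0), Real.sqrt_nonneg 2]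
  have hxh : x < 1/2 := by linarith
  set a := Real.sqrt ((1 - x) ^ 2 + 4 - (1 + x) ^ 2) with ha_def
  set b := Real.sqrt (4 - (1 + x) ^ 2) with hb_def
  set s := Real.sqrt 3 with hs_def
  have ha0 : 0 ≤ a := Real.sqrt_nonneg _
  have hb0 : 0 ≤ b := Real.sqrt_nonneg _
  have hs0 : 0 ≤ s := Real.sqrt_nonneg _
  have ha2 : a ^ 2 = 4 - 4 * x := by
    rw [ha_def, Real.sq_sqrt (by nlinarith)]; ring
  have hb2 : b ^ 2 = 4 - (1 + x) ^ 2 := by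
    rw [hb_def, Real.sq_sqrt (by nlinarith)]
  have hs2 : s ^ 2 = 3 := by
    rw [hs_def, Real.sq_sqrt (by norm_num)]
  have hale : a ≤ 2 := by nlinarith
  have hage : a ^ 2 ≥ 2 := by nlinarith
  have key : (4 + a) ^ 2 ≥ (2 * s * b) ^ 2 := by
    nlinarith [mul_nonneg (sub_nonneg.2 hale) hx0, sq_nonneg (a - 2),
      mul_nonneg (mul_nonneg ha0 ha0) ha0]
  have main : 4 + a ≥ 2 * s * b := by
    nlinarith [mul_nonneg (mul_nonneg (by norm_num : (0:ℝ) ≤ 2) hs0) hb0]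
  refine ⟨main, ⟨fun heq => ?_, fun hx => ?_⟩⟩
  · -- equality ⟹ x = 0
    have hsq : (4 + a) ^ 2 = (2 * s * b) ^ 2 := by rw [heq]
    have h8 : 8 * a = 16 - 20 * x - 12 * x ^ 2 := by
      linear_combination hsq + (4 * b ^ 2) * hs2 + 12 * hb2 - ha2
    have h64 : 256 - 256 * x = (16 - 20 * x - 12 * x ^ 2) ^ 2 := by
      linear_combination (8 * a + (16 - 20 * x - 12 * x ^ 2)) * h8 - 64 * ha2
    by_contra hxne
    have hxpos : 0 < x := lt_of_le_of_ne hx0 (Ne.symm hxne)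
    have hfac : (0:ℝ) < 24 - x - 30 * x ^ 2 - 9 * x ^ 3 := by nlinarith
    nlinarith [mul_pos hxpos hfac]
  · subst hx
    have : a = 2 := by
      rw [ha_def, show ((1:ℝ)-0)^2 + 4 - (1+0)^2 = (2:ℝ)^2 by norm_num,
        Real.sqrt_sq (by norm_num : (0:ℝ) ≤ 2)]
    rw [this]
    have hb3 : b = s := by rw [hb_def, hs_def]; norm_num
    rw [hb3]
    nlinarith [hs2]
end

section
/- For all real x with √2 − 1 ≤ x < 1, the strict inequality 4 + √(4 − 4x) > 4√3/(1+x) holds. -/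
/-- For `√2 − 1 ≤ x < 1`: `4 + √(4 − 4x) > 4√3/(1+x)`. -/
theorem boundary_case_strict (x : ℝ) (hx0 : Real.sqrt 2 - 1 ≤ x) (hx1 : x < 1) :
    4 + Real.sqrt (4 - 4 * x) > 4 * Real.sqrt 3 / (1 + x) := by
  set s2 := Real.sqrt 2 with hs2def
  have hs2 : s2 ^ 2 = 2 := Real.sq_sqrt (by norm_num)
  have hs2n : 0 ≤ s2 := Real.sqrt_nonneg 2
  have hs2ge : 1 ≤ s2 := by nlinarith
  have hxpos : 0 < 1 + x := by nlinarith
  have h4x : (0:ℝ) ≤ 4 - 4 * x := by linarith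
  set s := Real.sqrt (4 - 4 * x) with hsdef
  have hs : s ^ 2 = 4 - 4 * x := Real.sq_sqrt h4x
  have hsn : 0 ≤ s := Real.sqrt_nonneg _
  have hsge : 2 * (1 - x) ≤ s := by nlinarith [sq_nonneg (s - 2 * (1 - x)), sq_nonneg (s + 2 * (1 - x))]
  set s3 := Real.sqrt 3 with hs3def
  have hs3 : s3 ^ 2 = 3 := Real.sq_sqrt (by norm_num)
  have hs3n : 0 ≤ s3 := Real.sqrt_nonneg 3
  rw [gt_iff_lt, div_lt_iff₀ hxpos]
  nlinarith [sq_nonneg (2 * s2 - 1 - s3), sq_nonneg (s2 - 1), mul_nonneg hsn (le_of_lt hxpos), sq_nonneg (x - s2 + 1)]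
end
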